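/- Fix an integer d ≥ 1 and densities ρ1, ρ2 > 0 with ρ1 + ρ2 < 1, and for t ∈ [0,1] let E(ν) = (1−ν)·e(ρ1/(1−ν)) + t·ν·e(ρ2/ν) on [ρ2, 1−ρ1]. Set t_c = ξ(ρ1/(1−ρ2))/(2d). Then: (i) if 0 ≤ t ≤ t_c, the point ν = ρ2 minimizes E on [ρ2, 1−ρ1]; (ii) if t_c < t < 1, every minimizer ν of E on [ρ2, 1−ρ1] satisfies ρ2 < ν < ρ2/(ρ1+ρ2); (iii) if t = 1, the point ν = ρ2/(ρ1+ρ2) minimizes E on [ρ2, 1−ρ1]. -/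

import Mathlib

open scoped BigOperators

noncomputable section

/-- Lattice dispersion relation `ε_k = 2d − 2 Σᵢ cos kᵢ`. -/
def epsk (d : ℕ) (k : Fin d → ℝ) : ℝ := 2 * d - 2 * ∑ i, Real.cos (k i)

/-- `k` belongs to the Brillouin zone `[−π, π]^d`. -/
def inBZ (d : ℕ) (k : Fin d → ℝ) : Prop := ∀ i, |k i| ≤ Real.pi

/-- Volume of `{k ∈ [−π,π]^d : ε_k < E}`. -/
def volBelow (d : ℕ) (E : ℝ) : ℝ :=
  (MeasureTheory.volume {k : Fin d → ℝ | inBZ d k ∧ epsk d k < E}).toReal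

/-- The Fermi level `ε_F(ρ)`, defined by `ρ = (2π)^{−d}·vol{k ∈ [−π,π]^d : ε_k < ε_F(ρ)}`. -/
def fermiLevel (d : ℕ) (ρ : ℝ) : ℝ :=
  sInf {E : ℝ | ρ ≤ volBelow d E / (2 * Real.pi) ^ d}

/-- Ground-state energy per site of free lattice fermions at density `ρ`:
`e(ρ) = (2π)^{−d} ∫_{ε_k < ε_F(ρ)} ε_k dk`. -/
def enGS (d : ℕ) (ρ : ℝ) : ℝ :=
  (∫ k in {k : Fin d → ℝ | inBZ d k ∧ epsk d k < fermiLevel d ρ}, epsk d k) /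
    (2 * Real.pi) ^ d

/-- `ξ(ρ) = ρ·ε_F(ρ) − e(ρ)`. -/
def xiFun (d : ℕ) (ρ : ℝ) : ℝ := ρ * fermiLevel d ρ - enGS d ρ

/-!
By the bathtub principle the Fermi sea `{ε_k < ε_F(ρ)}` minimizes `∫ (ε_k - ε_F(ρ))` over
subsets of the Brillouin zone, so `e(ρ') ≥ e(ρ) + ε_F(ρ) (ρ' - ρ)`: the Fermi level is a
subgradient of `e`. Both terms of `E_t` are perspectives of `e`, hence `E_t` is convex on
`[ρ2, 1 - ρ1]` with nondecreasing slope `σ_t(ν) = ξ(ρ1/(1-ν)) - t ξ(ρ2/ν)`. Since `ξ(1) = 2d`,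
`σ_t(ρ2) ≥ 0` exactly when `t ≤ t_c`, which is (i). At `ν = ρ2/(ρ1+ρ2)` both species have
density `ρ1 + ρ2`, so the slope there is `(1 - t) ξ(ρ1 + ρ2)`: zero for `t = 1`, which is (iii),
and positive for `t < 1`. For (ii), the level sets of `ε_k` are null, so the Fermi level, hence
`ξ` and `σ_t`, are continuous; at a minimizer a continuous slope is `≤ 0` unless the minimizer
is `ρ2` and `≥ 0` unless it is `1 - ρ1`, while `σ_t(ρ2) < 0 < σ_t(ρ2/(ρ1+ρ2))`.
-/

open MeasureTheory Set Filter Topology Real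

theorem Continuous.apply_csInf_setOf_le_eq {α β : Type*} [ConditionallyCompleteLinearOrder α]
    [TopologicalSpace α] [OrderTopology α] [DenselyOrdered α] [NoMinOrder α] [LinearOrder β]
    [TopologicalSpace β] [OrderClosedTopology β] {g : α → β} (hg : Continuous g) {y : β}
    (hne : {x | y ≤ g x}.Nonempty) (hbdd : BddBelow {x | y ≤ g x}) :
    g (sInf {x | y ≤ g x}) = y := by
  set S := {x | y ≤ g x}
  have hmem : sInf S ∈ S := (isClosed_le continuous_const hg).csInf_mem hne hbdd
  refine le_antisymm (le_of_tendsto (x := 𝓝[<] sInf S)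
    (hg.continuousAt.tendsto.mono_left nhdsWithin_le_nhds) ?_) hmem
  exact eventually_nhdsWithin_of_forall fun x hx =>
    (not_le.1 (notMem_of_lt_csInf (s := S) hx hbdd)).le

theorem StrictMonoOn.continuousOn_of_leftInvOn {α β : Type*} [LinearOrder α]
    [TopologicalSpace α] [OrderTopology α] [LinearOrder β] [TopologicalSpace β] [OrderTopology β]
    {N : β → α} {f : α → β} {s : Set α} {a b : β} (hN : StrictMonoOn N (Icc a b))
    (hf : MapsTo f s (Icc a b)) (hinv : LeftInvOn N f s) : ContinuousOn f s := by
  intro y hy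
  refine tendsto_order.2 ⟨fun c hc => ?_, fun c hc => ?_⟩
  · rcases lt_or_ge c a with hca | hac
    · exact eventually_nhdsWithin_of_forall fun y' hy' => hca.trans_le (hf hy').1
    · have hc' : c ∈ Icc a b := ⟨hac, hc.le.trans (hf hy).2⟩
      have hNc : N c < y := hinv hy ▸ hN hc' (hf hy) hc
      filter_upwards [self_mem_nhdsWithin, mem_nhdsWithin_of_mem_nhds (eventually_gt_nhds hNc)]
        with y' hy's hy'
      by_contra! h
      exact hy'.not_ge (hinv hy's ▸ hN.monotoneOn (hf hy's) hc' h)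
  · rcases le_or_gt c b with hcb | hbc
    · have hc' : c ∈ Icc a b := ⟨(hf hy).1.trans hc.le, hcb⟩
      have hNc : y < N c := hinv hy ▸ hN (hf hy) hc' hc
      filter_upwards [self_mem_nhdsWithin, mem_nhdsWithin_of_mem_nhds (eventually_lt_nhds hNc)]
        with y' hy's hy'
      by_contra! h
      exact hy'.not_ge (hinv hy's ▸ hN.monotoneOn hc' (hf hy's) h)
    · exact eventually_nhdsWithin_of_forall fun y' hy' => (hf hy').2.trans_lt hbc

def IsSubgradientOn (f g : ℝ → ℝ) (s : Set ℝ) : Prop :=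
  ∀ x ∈ s, ∀ y ∈ s, f x + g x * (y - x) ≤ f y

/-- The Legendre conjugate `f^*(g x)` when `g x` is a subgradient of `f` at `x`. -/
def conjugateAt (f g : ℝ → ℝ) (x : ℝ) : ℝ := x * g x - f x

namespace IsSubgradientOn

variable {f g : ℝ → ℝ} {s : Set ℝ}

theorem monotoneOn (hf : IsSubgradientOn f g s) : MonotoneOn g s := by
  intro x hx y hy hxy
  rcases hxy.eq_or_lt with rfl | hlt
  · rfl
  · nlinarith [hf x hx y hy, hf y hy x hx]

theorem isMinOn {x : ℝ} (hf : IsSubgradientOn f g s) (hx : x ∈ s)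
    (h : ∀ y ∈ s, 0 ≤ g x * (y - x)) : IsMinOn f s x :=
  isMinOn_iff.2 fun y hy => by linarith [hf x hx y hy, h y hy]

theorem nonneg_of_isMinOn {a b x : ℝ} (hf : IsSubgradientOn f g (Icc a b))
    (hmin : IsMinOn f (Icc a b) x) (hx : x ∈ Icc a b) (hg : ContinuousWithinAt g (Icc a b) x)
    (hxb : x < b) : 0 ≤ g x := by
  by_contra! hneg
  have : NeBot (𝓝[Ioc x b] x) := left_nhdsWithin_Ioc_neBot hxb
  have hev : ∀ᶠ y in 𝓝[Ioc x b] x, g y < 0 :=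
    nhdsWithin_mono _ (Ioc_subset_Icc_self.trans (Icc_subset_Icc_left hx.1))
      (hg.eventually_lt_const hneg)
  obtain ⟨y, hgy, hy⟩ := (hev.and self_mem_nhdsWithin).exists
  have hyI : y ∈ Icc a b := ⟨hx.1.trans hy.1.le, hy.2⟩
  nlinarith [hf y hyI x hx, isMinOn_iff.1 hmin y hyI]

theorem nonpos_of_isMinOn {a b x : ℝ} (hf : IsSubgradientOn f g (Icc a b))
    (hmin : IsMinOn f (Icc a b) x) (hx : x ∈ Icc a b) (hg : ContinuousWithinAt g (Icc a b) x)
    (hax : a < x) : g x ≤ 0 := by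
  by_contra! hpos
  have : NeBot (𝓝[Ico a x] x) := right_nhdsWithin_Ico_neBot hax
  have hev : ∀ᶠ y in 𝓝[Ico a x] x, 0 < g y :=
    nhdsWithin_mono _ (Ico_subset_Icc_self.trans (Icc_subset_Icc_right hx.2))
      (hg.eventually_const_lt hpos)
  obtain ⟨y, hgy, hy⟩ := (hev.and self_mem_nhdsWithin).exists
  have hyI : y ∈ Icc a b := ⟨hy.1, hy.2.le.trans hx.2⟩
  nlinarith [hf y hyI x hx, isMinOn_iff.1 hmin y hyI]

theorem perspective (hf : IsSubgradientOn f g s) (r : ℝ) :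
    IsSubgradientOn (fun w => w * f (r / w)) (fun w => -conjugateAt f g (r / w))
      {w | 0 < w ∧ r / w ∈ s} := by
  rintro a ⟨ha, has⟩ b ⟨hb, hbs⟩
  have ea : a * (r / a) = r := mul_div_cancel₀ r ha.ne'
  have eb : b * (r / b) = r := mul_div_cancel₀ r hb.ne'
  unfold conjugateAt
  linear_combination
    mul_le_mul_of_nonneg_left (hf _ has _ hbs) hb.le - g (r / a) * eb + g (r / a) * ea

theorem continuousOn_conjugateAt (hf : IsSubgradientOn f g s) (hg : ContinuousOn g s) :
    ContinuousOn (conjugateAt f g) s := by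
  intro x hx
  have hgx : Tendsto g (𝓝[s] x) (𝓝 (g x)) := hg x hx
  refine tendsto_of_tendsto_of_tendsto_of_le_of_le'
    (g := fun y => conjugateAt f g x + x * (g y - g x))
    (h := fun y => conjugateAt f g x + y * (g y - g x)) ?_ ?_ ?_ ?_
  · simpa using tendsto_const_nhds.add (tendsto_const_nhds.mul (hgx.sub_const (g x)))
  · simpa using tendsto_const_nhds.add
      ((tendsto_id.mono_left nhdsWithin_le_nhds).mul (hgx.sub_const (g x)))
  · filter_upwards [self_mem_nhdsWithin] with y hy
    unfold conjugateAt
    linear_combination hf y hy x hx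
  · filter_upwards [self_mem_nhdsWithin] with y hy
    unfold conjugateAt
    linear_combination hf x hx y hy

end IsSubgradientOn

theorem div_mem_Ioc_zero_one {r x : ℝ} (hr : 0 < r) (hrx : r ≤ x) : r / x ∈ Ioc 0 1 :=
  ⟨div_pos hr (hr.trans_le hrx), div_le_one_of_le₀ hrx (hr.trans_le hrx).le⟩

def mixingEnergy (f : ℝ → ℝ) (ρ1 ρ2 t ν : ℝ) : ℝ :=
  (1 - ν) * f (ρ1 / (1 - ν)) + t * ν * f (ρ2 / ν)

def mixingSlope (f g : ℝ → ℝ) (ρ1 ρ2 t ν : ℝ) : ℝ :=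
  conjugateAt f g (ρ1 / (1 - ν)) - t * conjugateAt f g (ρ2 / ν)

section Mixing

variable {f g : ℝ → ℝ} {ρ1 ρ2 t : ℝ}

theorem isSubgradientOn_mixingEnergy (hf : IsSubgradientOn f g (Ioc 0 1)) (h1 : 0 < ρ1)
    (h2 : 0 < ρ2) (ht : 0 ≤ t) :
    IsSubgradientOn (mixingEnergy f ρ1 ρ2 t) (mixingSlope f g ρ1 ρ2 t) (Icc ρ2 (1 - ρ1)) := by
  intro x hx y hy
  have hA := hf.perspective ρ1
    (1 - x) ⟨by linarith [hx.2], div_mem_Ioc_zero_one h1 (by linarith [hx.2])⟩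
    (1 - y) ⟨by linarith [hy.2], div_mem_Ioc_zero_one h1 (by linarith [hy.2])⟩
  have hB := hf.perspective ρ2 x ⟨h2.trans_le hx.1, div_mem_Ioc_zero_one h2 hx.1⟩
    y ⟨h2.trans_le hy.1, div_mem_Ioc_zero_one h2 hy.1⟩
  simp only at hA hB
  unfold mixingEnergy mixingSlope
  linear_combination hA + mul_le_mul_of_nonneg_left hB ht

theorem continuousOn_mixingSlope (hξ : ContinuousOn (conjugateAt f g) (Ioc 0 1)) (h1 : 0 < ρ1)
    (h2 : 0 < ρ2) : ContinuousOn (mixingSlope f g ρ1 ρ2 t) (Icc ρ2 (1 - ρ1)) := by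
  refine (hξ.comp (by fun_prop (disch := intro x hx; linarith [hx.2]))
    fun x hx => div_mem_Ioc_zero_one h1 (by linarith [hx.2])).sub
    ((hξ.comp (by fun_prop (disch := intro x hx; linarith [hx.1]))
      fun x hx => div_mem_Ioc_zero_one h2 hx.1).const_smul t)

theorem mixingSlope_left (h2 : ρ2 ≠ 0) :
    mixingSlope f g ρ1 ρ2 t ρ2 = conjugateAt f g (ρ1 / (1 - ρ2)) - t * conjugateAt f g 1 := by
  rw [mixingSlope, div_self h2]

theorem mixingSlope_div_add (h1 : ρ1 ≠ 0) (h2 : ρ2 ≠ 0) (h12 : ρ1 + ρ2 ≠ 0) :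
    mixingSlope f g ρ1 ρ2 t (ρ2 / (ρ1 + ρ2)) = (1 - t) * conjugateAt f g (ρ1 + ρ2) := by
  have hA : ρ1 / (1 - ρ2 / (ρ1 + ρ2)) = ρ1 + ρ2 := by
    rw [one_sub_div h12, add_sub_cancel_right, div_div_eq_mul_div, mul_div_cancel_left₀ _ h1]
  have hB : ρ2 / (ρ2 / (ρ1 + ρ2)) = ρ1 + ρ2 := by field_simp
  rw [mixingSlope, hA, hB]
  ring

theorem div_add_mem_Icc (h1 : 0 < ρ1) (h2 : 0 < ρ2) (hsum : ρ1 + ρ2 ≤ 1) :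
    ρ2 / (ρ1 + ρ2) ∈ Icc ρ2 (1 - ρ1) := by
  constructor
  · rw [le_div_iff₀ (by linarith)]; nlinarith
  · rw [div_le_iff₀ (by linarith)]; nlinarith

theorem div_add_mem_Ioo (h1 : 0 < ρ1) (h2 : 0 < ρ2) (hsum : ρ1 + ρ2 < 1) :
    ρ2 / (ρ1 + ρ2) ∈ Ioo ρ2 (1 - ρ1) := by
  constructor
  · rw [lt_div_iff₀ (by linarith)]; nlinarith
  · rw [div_lt_iff₀ (by linarith)]; nlinarith

theorem isMinOn_mixingEnergy_left (hf : IsSubgradientOn f g (Ioc 0 1)) (h1 : 0 < ρ1)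
    (h2 : 0 < ρ2) (hsum : ρ1 + ρ2 ≤ 1) (ht : 0 ≤ t)
    (htc : t * conjugateAt f g 1 ≤ conjugateAt f g (ρ1 / (1 - ρ2))) :
    IsMinOn (mixingEnergy f ρ1 ρ2 t) (Icc ρ2 (1 - ρ1)) ρ2 :=
  (isSubgradientOn_mixingEnergy hf h1 h2 ht).isMinOn ⟨le_rfl, by linarith⟩ fun _ hy =>
    mul_nonneg (by rw [mixingSlope_left h2.ne']; linarith) (sub_nonneg.2 hy.1)

theorem isMinOn_mixingEnergy_div_add (hf : IsSubgradientOn f g (Ioc 0 1)) (h1 : 0 < ρ1)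
    (h2 : 0 < ρ2) (hsum : ρ1 + ρ2 ≤ 1) :
    IsMinOn (mixingEnergy f ρ1 ρ2 1) (Icc ρ2 (1 - ρ1)) (ρ2 / (ρ1 + ρ2)) :=
  (isSubgradientOn_mixingEnergy hf h1 h2 zero_le_one).isMinOn (div_add_mem_Icc h1 h2 hsum)
    fun _ _ => by
      rw [mixingSlope_div_add h1.ne' h2.ne' (by linarith), sub_self, zero_mul, zero_mul]

theorem mem_Ioo_of_isMinOn_mixingEnergy (hf : IsSubgradientOn f g (Ioc 0 1))
    (hξ : ContinuousOn (conjugateAt f g) (Ioc 0 1)) (h1 : 0 < ρ1) (h2 : 0 < ρ2)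
    (hsum : ρ1 + ρ2 < 1) (ht0 : 0 ≤ t) (ht1 : t < 1) (hpos : 0 < conjugateAt f g (ρ1 + ρ2))
    (htc : conjugateAt f g (ρ1 / (1 - ρ2)) < t * conjugateAt f g 1) {ν : ℝ}
    (hν : ν ∈ Icc ρ2 (1 - ρ1))
    (hmin : IsMinOn (mixingEnergy f ρ1 ρ2 t) (Icc ρ2 (1 - ρ1)) ν) :
    ρ2 < ν ∧ ν < ρ2 / (ρ1 + ρ2) := by
  have hsub := isSubgradientOn_mixingEnergy hf h1 h2 ht0
  have hcont := continuousOn_mixingSlope (t := t) hξ h1 h2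
  have hν0 := div_add_mem_Ioo h1 h2 hsum
  have hσ0 : mixingSlope f g ρ1 ρ2 t ρ2 < 0 := by rw [mixingSlope_left h2.ne']; linarith
  have hσν0 : 0 < mixingSlope f g ρ1 ρ2 t (ρ2 / (ρ1 + ρ2)) := by
    rw [mixingSlope_div_add h1.ne' h2.ne' (by linarith)]
    exact mul_pos (by linarith) hpos
  have hlt : ν < ρ2 / (ρ1 + ρ2) := by
    by_contra! h
    have hle := hsub.nonpos_of_isMinOn hmin hν (hcont ν hν) (hν0.1.trans_le h)
    have hge := hsub.monotoneOn (Ioo_subset_Icc_self hν0) hν h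
    linarith
  refine ⟨hν.1.lt_of_ne ?_, hlt⟩
  rintro rfl
  have := hsub.nonneg_of_isMinOn hmin hν (hcont _ hν) (hlt.trans hν0.2)
  linarith

end Mixing

theorem countable_setOf_cos_eq (c : ℝ) : {x : ℝ | cos x = c}.Countable := by
  refine ((countable_range fun k : ℤ => 2 * k * π + arccos c).union
    (countable_range fun k : ℤ => 2 * k * π - arccos c)).mono fun x (hx : cos x = c) => ?_
  have hc : cos x = cos (arccos c) := by
    rw [cos_arccos (hx ▸ neg_one_le_cos x) (hx ▸ cos_le_one x), hx]
  obtain ⟨k, hk | hk⟩ := cos_eq_cos_iff.1 hc.symm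
  · exact Or.inl ⟨k, hk.symm⟩
  · exact Or.inr ⟨k, hk.symm⟩

theorem volume_setOf_sum_cos_eq (n : ℕ) (c : ℝ) :
    volume {k : Fin (n + 1) → ℝ | ∑ i, cos (k i) = c} = 0 := by
  set T := {p : ℝ × (Fin n → ℝ) | cos p.1 + ∑ j, cos (p.2 j) = c}
  have hT : MeasurableSet T := measurableSet_eq_fun (by fun_prop) measurable_const
  have he := volume_preserving_piFinSuccAbove (fun _ : Fin (n + 1) => ℝ) 0
  have hpre : {k : Fin (n + 1) → ℝ | ∑ i, cos (k i) = c} =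
      MeasurableEquiv.piFinSuccAbove (fun _ => ℝ) 0 ⁻¹' T := by
    ext k
    simp [T, Fin.sum_univ_succ, Fin.tail]
  rw [hpre, he.measure_preimage hT.nullMeasurableSet, Measure.volume_eq_prod,
    Measure.prod_apply_symm hT]
  have hslice (y : Fin n → ℝ) : volume ((fun x => (x, y)) ⁻¹' T) = 0 :=
    measure_mono_null (fun x hx => eq_sub_of_add_eq hx)
      ((countable_setOf_cos_eq (c - ∑ j, cos (y j))).measure_zero _)
  simp [hslice]

section Dispersion

variable {d : ℕ}

@[fun_prop]
theorem continuous_epsk (d : ℕ) : Continuous (epsk d) := by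
  unfold epsk; fun_prop

theorem epsk_nonneg (k : Fin d → ℝ) : 0 ≤ epsk d k := by
  have := Finset.sum_le_sum fun i (_ : i ∈ Finset.univ) => cos_le_one (k i)
  simp only [Finset.sum_const, Finset.card_univ, Fintype.card_fin, nsmul_eq_mul, mul_one] at this
  unfold epsk; linarith

theorem epsk_le (k : Fin d → ℝ) : epsk d k ≤ 4 * d := by
  have := Finset.sum_le_sum fun i (_ : i ∈ Finset.univ) => neg_one_le_cos (k i)
  simp only [Finset.sum_const, Finset.card_univ, Fintype.card_fin, nsmul_eq_mul, mul_neg,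
    mul_one] at this
  unfold epsk; linarith

theorem epsk_const (s : ℝ) : epsk d (fun _ => s) = 2 * d * (1 - cos s) := by
  simp only [epsk, Finset.sum_const, Finset.card_univ, Fintype.card_fin, nsmul_eq_mul]; ring

theorem volume_setOf_epsk_eq (hd : 1 ≤ d) (E : ℝ) :
    volume {k : Fin d → ℝ | epsk d k = E} = 0 := by
  obtain ⟨n, rfl⟩ := Nat.exists_eq_add_of_le' hd
  refine measure_mono_null (fun k (hk : epsk _ k = E) => ?_)
    (volume_setOf_sum_cos_eq n ((2 * (n + 1 : ℕ) - E) / 2))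
  show ∑ i, cos (k i) = _
  rw [epsk] at hk
  linarith

def brillouinZone (d : ℕ) : Set (Fin d → ℝ) := {k | inBZ d k}

theorem brillouinZone_eq_pi : brillouinZone d = univ.pi fun _ => Icc (-π) π := by
  ext k
  simp only [mem_univ_pi, mem_Icc, ← abs_le]
  rfl

theorem isCompact_brillouinZone : IsCompact (brillouinZone d) := by
  rw [brillouinZone_eq_pi]; exact isCompact_univ_pi fun _ => isCompact_Icc

theorem measurableSet_brillouinZone : MeasurableSet (brillouinZone d) :=
  isCompact_brillouinZone.isClosed.measurableSet

theorem measureReal_brillouinZone : volume.real (brillouinZone d) = (2 * π) ^ d := by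
  rw [measureReal_def, brillouinZone_eq_pi, volume_pi_pi]
  simp [Real.volume_Icc, ← two_mul, pi_pos.le]

def fermiSea (d : ℕ) (E : ℝ) : Set (Fin d → ℝ) := {k | inBZ d k ∧ epsk d k < E}

theorem fermiSea_subset_brillouinZone (E : ℝ) : fermiSea d E ⊆ brillouinZone d :=
  fun _ hk => hk.1

theorem fermiSea_mono {E E' : ℝ} (h : E ≤ E') : fermiSea d E ⊆ fermiSea d E' :=
  fun _ hk => ⟨hk.1, hk.2.trans_le h⟩

theorem measurableSet_fermiSea (E : ℝ) : MeasurableSet (fermiSea d E) :=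
  measurableSet_brillouinZone.inter
    (measurableSet_lt (continuous_epsk d).measurable measurable_const)

theorem volume_fermiSea_ne_top (E : ℝ) : volume (fermiSea d E) ≠ ⊤ :=
  measure_ne_top_of_subset (fermiSea_subset_brillouinZone E) isCompact_brillouinZone.measure_ne_top

theorem fermiSea_of_nonpos {E : ℝ} (hE : E ≤ 0) : fermiSea d E = ∅ :=
  eq_empty_of_forall_notMem fun k hk => (hE.trans (epsk_nonneg k)).not_gt hk.2

theorem fermiSea_ae_eq_brillouinZone (hd : 1 ≤ d) :
    fermiSea d (4 * d) =ᵐ[volume] brillouinZone d := by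
  have : fermiSea d (4 * d) = brillouinZone d \ {k | epsk d k = 4 * d} := by
    ext k
    exact and_congr_right fun _ => (epsk_le k).lt_iff_ne
  rw [this]
  exact sdiff_null_ae_eq_self (volume_setOf_epsk_eq hd _)

theorem continuous_volume_fermiSea (hd : 1 ≤ d) :
    Continuous fun E => volume (fermiSea d E) := by
  refine continuous_iff_continuousAt.2 fun E => tendsto_measure_of_ae_tendsto_indicator (𝓝 E)
    (measurableSet_fermiSea E) measurableSet_fermiSea measurableSet_brillouinZone
    isCompact_brillouinZone.measure_ne_top (Eventually.of_forall fermiSea_subset_brillouinZone) ?_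
  have hnull : ∀ᵐ k, epsk d k ≠ E :=
    measure_eq_zero_iff_ae_notMem.1 (volume_setOf_epsk_eq hd E)
  filter_upwards [hnull] with k hk
  rcases hk.lt_or_gt with h | h
  · filter_upwards [eventually_gt_nhds h] with E' hE'
    simp [fermiSea, h, hE']
  · filter_upwards [eventually_lt_nhds h] with E' hE'
    simp [fermiSea, h.not_gt, hE'.not_gt]

theorem volume_fermiSea_lt_volume_fermiSea {E E' : ℝ} (hE : 0 ≤ E) (hEE' : E < E')
    (hE' : E' ≤ 4 * d) : volume (fermiSea d E) < volume (fermiSea d E') := by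
  obtain ⟨s, hs, hsm⟩ : ∃ s ∈ Ioo 0 π, epsk d (fun _ => s) = (E + E') / 2 := by
    refine intermediate_value_Ioo pi_pos.le (by fun_prop) ?_
    simp only [epsk_const, cos_zero, cos_pi]
    constructor <;> linarith
  set U := (univ.pi fun _ : Fin d => Ioo (-π) π) ∩ epsk d ⁻¹' Ioo E E'
  have hU : IsOpen U :=
    (isOpen_set_pi finite_univ fun _ _ => isOpen_Ioo).inter
      (isOpen_Ioo.preimage (continuous_epsk d))
  have hUne : U.Nonempty := by
    refine ⟨fun _ => s, fun _ _ => ⟨by linarith [hs.1, pi_pos], hs.2⟩, ?_⟩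
    rw [mem_preimage, hsm, mem_Ioo]
    constructor <;> linarith
  have hUsub : U ⊆ fermiSea d E' \ fermiSea d E := fun k hk =>
    ⟨⟨fun i => abs_le.2 ⟨(hk.1 i trivial).1.le, (hk.1 i trivial).2.le⟩, hk.2.2⟩,
      fun h => h.2.not_gt hk.2.1⟩
  calc volume (fermiSea d E)
      < volume (fermiSea d E) + volume (fermiSea d E' \ fermiSea d E) :=
        ENNReal.lt_add_right (volume_fermiSea_ne_top E)
          ((hU.measure_pos volume hUne).trans_le (measure_mono hUsub)).ne'
    _ = volume (fermiSea d E') := by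
        rw [measure_add_sdiff (measurableSet_fermiSea E).nullMeasurableSet,
          union_eq_right.2 (fermiSea_mono hEE'.le)]

/-- Integrated density of states. -/
def idos (d : ℕ) (E : ℝ) : ℝ := volBelow d E / (2 * π) ^ d

theorem idos_eq (E : ℝ) : idos d E = volume.real (fermiSea d E) / (2 * π) ^ d := rfl

theorem continuous_idos (hd : 1 ≤ d) : Continuous (idos d) :=
  ((ENNReal.continuousOn_toReal.comp_continuous (continuous_volume_fermiSea hd)
    fun E => volume_fermiSea_ne_top E)).div_const _

theorem idos_of_nonpos {E : ℝ} (hE : E ≤ 0) : idos d E = 0 := by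
  simp [idos_eq, fermiSea_of_nonpos hE]

theorem idos_four_mul (hd : 1 ≤ d) : idos d (4 * d) = 1 := by
  rw [idos_eq, measureReal_congr (fermiSea_ae_eq_brillouinZone hd), measureReal_brillouinZone,
    div_self (by positivity)]

theorem strictMonoOn_idos : StrictMonoOn (idos d) (Icc 0 (4 * d)) := fun E hE E' hE' h =>
  div_lt_div_of_pos_right ((ENNReal.toReal_lt_toReal (volume_fermiSea_ne_top E)
    (volume_fermiSea_ne_top E')).2 (volume_fermiSea_lt_volume_fermiSea hE.1 h hE'.2))
    (by positivity)

theorem bddBelow_setOf_le_idos {ρ : ℝ} (hρ : 0 < ρ) : BddBelow {E | ρ ≤ idos d E} :=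
  ⟨0, fun _ hE => not_lt.1 fun h => hρ.not_ge (idos_of_nonpos (d := d) h.le ▸ hE)⟩

theorem four_mul_mem_setOf_le_idos (hd : 1 ≤ d) {ρ : ℝ} (hρ : ρ ≤ 1) :
    4 * (d : ℝ) ∈ {E | ρ ≤ idos d E} :=
  show ρ ≤ idos d (4 * d) by rw [idos_four_mul hd]; exact hρ

theorem idos_fermiLevel (hd : 1 ≤ d) {ρ : ℝ} (hρ : ρ ∈ Ioc 0 1) :
    idos d (fermiLevel d ρ) = ρ :=
  (continuous_idos hd).apply_csInf_setOf_le_eq ⟨_, four_mul_mem_setOf_le_idos hd hρ.2⟩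
    (bddBelow_setOf_le_idos hρ.1)

theorem fermiLevel_mem_Ioc (hd : 1 ≤ d) {ρ : ℝ} (hρ : ρ ∈ Ioc 0 1) :
    fermiLevel d ρ ∈ Ioc 0 (4 * (d : ℝ)) := by
  refine ⟨not_le.1 fun h => ?_,
    csInf_le (bddBelow_setOf_le_idos hρ.1) (four_mul_mem_setOf_le_idos hd hρ.2)⟩
  have := idos_fermiLevel hd hρ
  rw [idos_of_nonpos h] at this
  exact hρ.1.ne this

theorem continuousOn_fermiLevel (hd : 1 ≤ d) : ContinuousOn (fermiLevel d) (Ioc 0 1) :=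
  strictMonoOn_idos.continuousOn_of_leftInvOn
    (fun _ hρ => Ioc_subset_Icc_self (fermiLevel_mem_Ioc hd hρ))
    fun _ hρ => idos_fermiLevel hd hρ

theorem fermiLevel_one (hd : 1 ≤ d) : fermiLevel d 1 = 4 * d :=
  strictMonoOn_idos.injOn (Ioc_subset_Icc_self (fermiLevel_mem_Ioc hd ⟨one_pos, le_rfl⟩))
    ⟨by positivity, le_rfl⟩ (by rw [idos_fermiLevel hd ⟨one_pos, le_rfl⟩, idos_four_mul hd])

theorem measureReal_fermiSea_fermiLevel (hd : 1 ≤ d) {ρ : ℝ} (hρ : ρ ∈ Ioc 0 1) :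
    volume.real (fermiSea d (fermiLevel d ρ)) = ρ * (2 * π) ^ d := by
  have := idos_fermiLevel hd hρ
  rwa [idos_eq, div_eq_iff (by positivity)] at this

theorem bathtub_setIntegral_le {α : Type*} [MeasurableSpace α] {μ : Measure α} {φ : α → ℝ}
    {A s t : Set α} (hφ : IntegrableOn φ A μ) (hs : MeasurableSet s) (ht : MeasurableSet t)
    (hsA : s ⊆ A) (htA : t ⊆ A) (hneg : ∀ x ∈ t, φ x ≤ 0)
    (hpos : ∀ x ∈ A \ t, 0 ≤ φ x) :
    ∫ x in t, φ x ∂μ ≤ ∫ x in s, φ x ∂μ := by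
  rw [← integral_inter_add_sdiff hs (hφ.mono_set htA),
    ← integral_inter_add_sdiff ht (hφ.mono_set hsA), inter_comm]
  gcongr ?_ + ?_
  · exact le_rfl
  · exact (setIntegral_nonpos (ht.diff hs) fun x hx => hneg x hx.1).trans
      (setIntegral_nonneg (hs.diff ht) fun x hx => hpos x ⟨hsA hx.1, hx.2⟩)

theorem integrableOn_epsk_sub (c : ℝ) :
    IntegrableOn (fun k => epsk d k - c) (brillouinZone d) :=
  (by fun_prop : Continuous fun k => epsk d k - c).continuousOn.integrableOn_compact
    isCompact_brillouinZone

theorem enGS_eq (ρ : ℝ) :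
    enGS d ρ = (∫ k in fermiSea d (fermiLevel d ρ), epsk d k) / (2 * π) ^ d := rfl

theorem integral_fermiSea_fermiLevel_sub (hd : 1 ≤ d) {ρ : ℝ} (hρ : ρ ∈ Ioc 0 1) (c : ℝ) :
    ∫ k in fermiSea d (fermiLevel d ρ), (epsk d k - c) =
      (enGS d ρ - c * ρ) * (2 * π) ^ d := by
  have hε : IntegrableOn (epsk d) (fermiSea d (fermiLevel d ρ)) := by
    simpa using (integrableOn_epsk_sub (d := d) 0).mono_set (fermiSea_subset_brillouinZone _)
  rw [integral_sub hε (integrableOn_const (volume_fermiSea_ne_top _)), setIntegral_const,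
    measureReal_fermiSea_fermiLevel hd hρ, smul_eq_mul, enGS_eq, sub_mul,
    div_mul_cancel₀ _ (by positivity)]
  ring

theorem isSubgradientOn_enGS (hd : 1 ≤ d) :
    IsSubgradientOn (enGS d) (fermiLevel d) (Ioc 0 1) := by
  intro x hx y hy
  have := bathtub_setIntegral_le (integrableOn_epsk_sub (d := d) (fermiLevel d x))
    (measurableSet_fermiSea (fermiLevel d y)) (measurableSet_fermiSea (fermiLevel d x))
    (fermiSea_subset_brillouinZone _) (fermiSea_subset_brillouinZone _)
    (fun k hk => sub_nonpos.2 hk.2.le)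
    fun k hk => sub_nonneg.2 (not_lt.1 fun h => hk.2 ⟨hk.1, h⟩)
  rw [integral_fermiSea_fermiLevel_sub hd hx, integral_fermiSea_fermiLevel_sub hd hy] at this
  have := le_of_mul_le_mul_right this (by positivity)
  linarith

theorem xiFun_pos (hd : 1 ≤ d) {ρ : ℝ} (hρ : ρ ∈ Ioc 0 1) : 0 < xiFun d ρ := by
  set F := fermiLevel d ρ
  have hsea : 0 < volume (fermiSea d F) := by
    have h := measureReal_fermiSea_fermiLevel hd hρ
    rw [measureReal_def] at h
    exact (ENNReal.toReal_pos_iff.1 (h ▸ mul_pos hρ.1 (by positivity))).1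
  have hint : 0 < ∫ k in fermiSea d F, -(epsk d k - F) := by
    rw [setIntegral_pos_iff_support_of_nonneg_ae
      (ae_restrict_of_forall_mem (measurableSet_fermiSea F)
        fun k hk => neg_nonneg.2 (sub_nonpos.2 hk.2.le))
      ((integrableOn_epsk_sub F).mono_set (fermiSea_subset_brillouinZone F)).neg]
    exact hsea.trans_le (measure_mono fun k hk => ⟨neg_ne_zero.2 (sub_ne_zero.2 hk.2.ne), hk⟩)
  rw [integral_neg, integral_fermiSea_fermiLevel_sub hd hρ] at hint
  have : 0 < (2 * π) ^ d := by positivity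
  unfold xiFun
  nlinarith

theorem integral_cos_brillouinZone (i : Fin d) :
    ∫ k in brillouinZone d, cos (k i) = 0 := by
  classical
  rw [brillouinZone_eq_pi, volume_pi, Measure.restrict_pi_pi]
  calc ∫ k, cos (k i) ∂Measure.pi (fun _ => volume.restrict (Icc (-π) π))
      = ∫ k, ∏ j, (fun j x => if j = i then cos x else 1) j (k j)
          ∂Measure.pi (fun _ => volume.restrict (Icc (-π) π)) := by simp
    _ = 0 := by
      rw [integral_fintype_prod_eq_prod (fun j (x : ℝ) => if j = i then cos x else 1)]
      refine Finset.prod_eq_zero (Finset.mem_univ i) ?_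
      simp [integral_Icc_eq_integral_Ioc,
        ← intervalIntegral.integral_of_le (neg_le_self pi_pos.le)]

theorem integral_epsk_brillouinZone :
    ∫ k in brillouinZone d, epsk d k = 2 * d * (2 * π) ^ d := by
  have hcos (i : Fin d) : IntegrableOn (fun k : Fin d → ℝ => cos (k i)) (brillouinZone d) :=
    (by fun_prop : Continuous fun k : Fin d → ℝ => cos (k i)).continuousOn.integrableOn_compact
      isCompact_brillouinZone
  simp only [epsk]
  rw [integral_sub (integrableOn_const (C := 2 * (d : ℝ)) isCompact_brillouinZone.measure_ne_top)
    ((integrable_finsetSum _ fun i _ => hcos i).const_mul 2), setIntegral_const,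
    integral_const_mul, integral_finsetSum _ fun i _ => hcos i, measureReal_brillouinZone]
  simp [integral_cos_brillouinZone]
  ring

theorem xiFun_one (hd : 1 ≤ d) : xiFun d 1 = 2 * d := by
  rw [xiFun, enGS_eq, fermiLevel_one hd, setIntegral_congr_set (fermiSea_ae_eq_brillouinZone hd),
    integral_epsk_brillouinZone, mul_div_assoc, div_self (by positivity)]
  ring

theorem continuousOn_xiFun (hd : 1 ≤ d) : ContinuousOn (xiFun d) (Ioc 0 1) :=
  (isSubgradientOn_enGS hd).continuousOn_conjugateAt (continuousOn_fermiLevel hd)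

end Dispersion

/-- For `d ≥ 1`, densities `ρ1, ρ2 > 0` with `ρ1 + ρ2 < 1`, and `t ∈ [0,1]`, consider
`E_t(ν) = (1−ν)·e(ρ1/(1−ν)) + t·ν·e(ρ2/ν)` on `[ρ2, 1−ρ1]` and set
`t_c = ξ(ρ1/(1−ρ2))/(2d)`. Then: (i) if `0 ≤ t ≤ t_c` then `ν = ρ2` minimizes `E_t`;
(ii) if `t_c < t < 1` then every minimizer `ν` satisfies `ρ2 < ν < ρ2/(ρ1+ρ2)`;
(iii) if `t = 1` then `ν = ρ2/(ρ1+ρ2)` minimizes `E_t`. -/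
theorem segregated_energy_minimizers (d : ℕ) (hd : 1 ≤ d) (ρ1 ρ2 : ℝ)
    (h1 : 0 < ρ1) (h2 : 0 < ρ2) (hsum : ρ1 + ρ2 < 1)
    (E : ℝ → ℝ → ℝ)
    (hE : ∀ t ν, E t ν = (1 - ν) * enGS d (ρ1 / (1 - ν)) + t * ν * enGS d (ρ2 / ν))
    (tc : ℝ) (htc : tc = xiFun d (ρ1 / (1 - ρ2)) / (2 * d)) :
    (∀ t, 0 ≤ t → t ≤ tc → ∀ ν ∈ Set.Icc ρ2 (1 - ρ1), E t ρ2 ≤ E t ν) ∧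
    (∀ t, tc < t → t < 1 → ∀ ν ∈ Set.Icc ρ2 (1 - ρ1),
      (∀ ν' ∈ Set.Icc ρ2 (1 - ρ1), E t ν ≤ E t ν') →
        ρ2 < ν ∧ ν < ρ2 / (ρ1 + ρ2)) ∧
    (∀ ν ∈ Set.Icc ρ2 (1 - ρ1), E 1 (ρ2 / (ρ1 + ρ2)) ≤ E 1 ν) := by
  obtain rfl : E = mixingEnergy (enGS d) ρ1 ρ2 := funext₂ hE
  subst htc
  have hf := isSubgradientOn_enGS hd
  have h2d : (0 : ℝ) < 2 * d := by positivity
  have hξu : 0 < xiFun d (ρ1 / (1 - ρ2)) := xiFun_pos hd (div_mem_Ioc_zero_one h1 (by linarith))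
  refine ⟨fun t ht htc => isMinOn_iff.1 ?_, fun t htc ht1 ν hν hmin => ?_,
    isMinOn_iff.1 (isMinOn_mixingEnergy_div_add hf h1 h2 hsum.le)⟩
  · refine isMinOn_mixingEnergy_left hf h1 h2 hsum.le ht ?_
    show t * xiFun d 1 ≤ _
    rwa [xiFun_one hd, ← le_div_iff₀ h2d]
  · refine mem_Ioo_of_isMinOn_mixingEnergy hf (continuousOn_xiFun hd) h1 h2 hsum
      ((div_pos hξu h2d).le.trans htc.le) ht1 (xiFun_pos hd ⟨by linarith, hsum.le⟩) ?_ hν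
      (isMinOn_iff.2 hmin)
    show _ < t * xiFun d 1
    rwa [xiFun_one hd, ← div_lt_iff₀ h2d]

end
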